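/- arXiv:1308.2583 — 4 statements merged into one kernel-verified Lean document; each statement's English description precedes it below -/
import Mathlib

section
/- The operators h_n^i ω = ∫_I (φ_n^i)*ω on polynomial differential forms on the n-simplex, where φ_n^i(u, t⃗) = u·t⃗ + (1−u)·e_i, satisfy the homotopy identity d∘h_n^i + h_n^i∘d = id − ε_n^i, where ε_n^i is evaluation at the vertex e_i. -/
noncomputable section

open MvPolynomial

/- We model the DGCA `Ω*(Δⁿ)` of polynomial differential forms on the standard
`n`-simplex in the affine chart centred at the vertex `e_i` (coordinates
`x_j, j ≠ i`, the vertex `e_i` being the origin; the relation `Σ x_j = 1`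
eliminates one coordinate, so forms are free polynomial forms in `n` variables):
a form is a family `ω : Finset (Fin n) → K[x₁,…,x_n]`, the component `ω S` being
the coefficient of `dx_S`. -/

/-- Polynomial differential forms on the simplex (in the affine chart based at the
vertex): `ω = Σ_S ω_S dx_S`. -/
abbrev SForm (n : ℕ) (K : Type*) [CommRing K] :=
  Finset (Fin n) → MvPolynomial (Fin n) K

/-- The de Rham differential `d`. -/
def dForm {n : ℕ} {K : Type*} [CommRing K] (ω : SForm n K) : SForm n K :=
  fun S => ∑ j ∈ S,
    ((-1 : MvPolynomial (Fin n) K) ^ (S.filter (· < j)).card) *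
      MvPolynomial.pderiv j (ω (S.erase j))

/-- The integral `∫₀¹ u^{k-1} f(u·x) du`: on a monomial `c·x^α` it gives
`c·x^α / (k + |α|)`. -/
def scaleInt {n : ℕ} {K : Type*} [Field K] [CharZero K] (k : ℕ)
    (p : MvPolynomial (Fin n) K) : MvPolynomial (Fin n) K :=
  ∑ α ∈ p.support,
    MvPolynomial.monomial α
      (MvPolynomial.coeff α p / ((k + α.sum fun _ e => e : ℕ) : K))

/-- The homotopy operator `h_n^i ω = ∫_I (φ_n^i)* ω` associated with the linear
contraction `φ_n^i(u, x) = u·x + (1−u)·e_i` of the simplex onto the vertex `e_i`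
(the origin of the chart): explicitly
`(h ω)_S = Σ_{j ∉ S} ± x_j ∫₀¹ u^{|S|} ω_{S ∪ {j}}(u x) du`. -/
def hOp {n : ℕ} {K : Type*} [Field K] [CharZero K] (ω : SForm n K) : SForm n K :=
  fun S => ∑ j ∈ Sᶜ,
    ((-1 : MvPolynomial (Fin n) K) ^ (S.filter (· < j)).card) *
      (MvPolynomial.X j * scaleInt (S.card + 1) (ω (insert j S)))

/-- Evaluation `ε_n^i` at the vertex `e_i` (the origin of the chart): it keeps the
constant term of the function part and kills all forms of positive degree. -/
def evalVertex {n : ℕ} {K : Type*} [CommRing K] (ω : SForm n K) : SForm n K :=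
  fun S => if S = ∅ then MvPolynomial.C (MvPolynomial.constantCoeff (ω ∅)) else 0

/-! Componentwise, `(dh + hd) ω` splits into diagonal terms, where `h` inserts and `d` removes
the same index `j`, and cross terms with two distinct indices; the cross terms cancel in pairs
since `dx_j ∧ dx_k = -dx_k ∧ dx_j`. Writing `I_k` for `scaleInt k`, the diagonal terms of `dx_S`
add up to `|S| I_{|S|} ω_S + Σ_j x_j I_{|S|+1} (∂_j ω_S) = I_{|S|} ((|S| + E) ω_S)`, with
`E = Σ_j x_j ∂_j` the Euler operator. As `I_k` divides a monomial of degree `m` by `k + m`, this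
is `ω_S`, except for the constant term of a function, where the division is by zero. -/

lemma map_neg_one_pow_mul {R S F : Type*} [Ring R] [Ring S] [FunLike F R S]
    [AddMonoidHomClass F R S] (f : F) (m : ℕ) (x : R) :
    f ((-1) ^ m * x) = (-1) ^ m * f x := by
  induction m with
  | zero => simp
  | succ m ih => simp only [pow_succ, mul_neg_one, neg_mul, map_neg, ih]

lemma coeff_sum_X_mul_pderiv {σ R : Type*} [Fintype σ] [CommSemiring R] (p : MvPolynomial σ R)
    (β : σ →₀ ℕ) :
    coeff β (∑ j, X j * pderiv j p) = β.degree * coeff β p := by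
  classical
  induction p using MvPolynomial.induction_on' with
  | monomial α c =>
    simp only [X_mul_pderiv_monomial]
    rw [← Finset.sum_smul, ← Finsupp.degree_eq_sum, coeff_smul, coeff_monomial]
    split_ifs with h <;> simp [h]
  | add p q hp hq =>
    simp only [map_add, mul_add, Finset.sum_add_distrib, coeff_add] at hp hq ⊢
    rw [hp, hq]

section ScaleInt

variable {n : ℕ} {K : Type*} [Field K] [CharZero K]

lemma coeff_scaleInt (k : ℕ) (p : MvPolynomial (Fin n) K) (β : Fin n →₀ ℕ) :
    coeff β (scaleInt k p) = coeff β p / ((k + β.degree : ℕ) : K) := by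
  classical
  simp only [scaleInt, coeff_sum, coeff_monomial, Finset.sum_ite_eq', mem_support_iff]
  split_ifs with h
  · rfl
  · rw [not_not.mp h, zero_div]

lemma scaleInt_monomial (k : ℕ) (α : Fin n →₀ ℕ) (c : K) :
    scaleInt k (monomial α c) = monomial α (c / ((k + α.degree : ℕ) : K)) := by
  classical
  ext β
  simp only [coeff_scaleInt, coeff_monomial]
  split_ifs with h
  · rw [h]
  · rw [zero_div]

variable (n K) in
def scaleIntLinearMap (k : ℕ) : MvPolynomial (Fin n) K →ₗ[K] MvPolynomial (Fin n) K where
  toFun := scaleInt k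
  map_add' p q := by ext β; simp only [coeff_scaleInt, coeff_add, add_div]
  map_smul' c p := by ext β; simp only [coeff_scaleInt, coeff_smul, smul_eq_mul, mul_div_assoc,
    RingHom.id_apply]

@[simp]
lemma scaleIntLinearMap_apply (k : ℕ) (p : MvPolynomial (Fin n) K) :
    scaleIntLinearMap n K k p = scaleInt k p := rfl

lemma pderiv_scaleInt (k : ℕ) (j : Fin n) (p : MvPolynomial (Fin n) K) :
    pderiv j (scaleInt k p) = scaleInt (k + 1) (pderiv j p) := by
  ext β
  simp only [coeff_pderiv, coeff_scaleInt, map_add, Finsupp.degree_single]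
  push_cast
  ring

lemma X_mul_scaleInt_succ (k : ℕ) (j : Fin n) (p : MvPolynomial (Fin n) K) :
    X j * scaleInt (k + 1) p = scaleInt k (X j * p) := by
  induction p using MvPolynomial.induction_on' with
  | monomial α c =>
    simp only [X, scaleInt_monomial, monomial_mul, one_mul, map_add, Finsupp.degree_single]
    congr 2
    push_cast
    ring
  | add p q hp hq =>
    simp only [← scaleIntLinearMap_apply, map_add, mul_add] at hp hq ⊢
    rw [hp, hq]

lemma scaleInt_euler (s : ℕ) (p : MvPolynomial (Fin n) K) :
    scaleInt s (s • p + ∑ j, X j * pderiv j p) =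
      p - if s = 0 then C (constantCoeff p) else 0 := by
  classical
  ext β
  rw [coeff_scaleInt, coeff_add, coeff_sum_X_mul_pderiv, coeff_smul, nsmul_eq_mul, ← add_mul,
    coeff_sub]
  by_cases hβ : s + β.degree = 0
  · obtain ⟨rfl, hdeg⟩ := Nat.add_eq_zero_iff.mp hβ
    obtain rfl := (Finsupp.degree_eq_zero_iff β).mp hdeg
    simp [constantCoeff_eq]
  · have hβK : ((s + β.degree : ℕ) : K) ≠ 0 := Nat.cast_ne_zero.mpr hβ
    have hsβ : s = 0 → β ≠ 0 := by rintro rfl rfl; simp at hβ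
    rw [← Nat.cast_add, mul_div_cancel_left₀ _ hβK]
    split_ifs with hs
    · simp [coeff_C, Ne.symm (hsβ hs)]
    · simp

end ScaleInt

section Signs

variable {α R : Type*} [LinearOrder α] [CommRing R]

lemma filter_lt_erase_self (s : Finset α) (a : α) :
    (s.erase a).filter (· < a) = s.filter (· < a) := by
  rw [Finset.filter_erase]
  exact Finset.erase_eq_of_notMem (by simp)

lemma filter_lt_insert_self (s : Finset α) (a : α) :
    (insert a s).filter (· < a) = s.filter (· < a) := by
  rw [Finset.filter_insert, if_neg (lt_irrefl a)]

lemma neg_one_pow_filter_lt_anticomm {s : Finset α} {j k : α} (hj : j ∈ s) (hk : k ∉ s) :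
    (-1 : R) ^ (s.filter (· < j)).card * (-1 : R) ^ ((s.erase j).filter (· < k)).card =
      -((-1 : R) ^ (s.filter (· < k)).card * (-1 : R) ^ ((insert k s).filter (· < j)).card) := by
  have hjk : j ≠ k := fun h => hk (h ▸ hj)
  rw [Finset.filter_erase, Finset.filter_insert]
  rcases hjk.lt_or_gt with h | h
  · have hj' : j ∈ s.filter (· < k) := Finset.mem_filter.mpr ⟨hj, h⟩
    rw [if_neg (not_lt.mpr h.le), ← Finset.card_erase_add_one hj', pow_succ]
    ring
  · rw [Finset.erase_eq_of_notMem (by simp [not_lt.mpr h.le]), if_pos h,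
      Finset.card_insert_of_notMem (by simp [hk]), pow_succ]
    ring

lemma sum_sum_neg_one_pow_filter_lt_cancel [Fintype α] (s : Finset α)
    (t : α → α → R) :
    (∑ j ∈ s, ∑ k ∈ sᶜ,
        (-1 : R) ^ (s.filter (· < j)).card * (-1 : R) ^ ((s.erase j).filter (· < k)).card * t j k) +
      ∑ k ∈ sᶜ, ∑ j ∈ s,
        (-1 : R) ^ (s.filter (· < k)).card * (-1 : R) ^ ((insert k s).filter (· < j)).card * t j k
      = 0 := by
  rw [Finset.sum_comm, ← Finset.sum_add_distrib]
  refine Finset.sum_eq_zero fun k hk => ?_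
  rw [← Finset.sum_add_distrib]
  refine Finset.sum_eq_zero fun j hj => ?_
  rw [← add_mul, neg_one_pow_filter_lt_anticomm hj (Finset.mem_compl.mp hk), neg_add_cancel,
    zero_mul]

end Signs

lemma evalVertex_apply {n : ℕ} {K : Type*} [CommRing K] (ω : SForm n K) (S : Finset (Fin n)) :
    evalVertex ω S = if S.card = 0 then C (constantCoeff (ω S)) else 0 := by
  simp only [evalVertex, Finset.card_eq_zero]
  split_ifs with h
  · rw [h]
  · rfl

section Forms

variable {n : ℕ} {K : Type*} [Field K] [CharZero K]

lemma dForm_hOp_apply (ω : SForm n K) (S : Finset (Fin n)) :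
    dForm (hOp ω) S =
      ∑ j ∈ S, (scaleInt S.card (ω S) + X j * scaleInt (S.card + 1) (pderiv j (ω S))) +
      ∑ j ∈ S, ∑ k ∈ Sᶜ,
        (-1) ^ (S.filter (· < j)).card * (-1) ^ ((S.erase j).filter (· < k)).card *
          (X k * scaleInt (S.card + 1) (pderiv j (ω (insert k (S.erase j))))) := by
  simp only [dForm, hOp]
  rw [← Finset.sum_add_distrib]
  refine Finset.sum_congr rfl fun j hj => ?_
  rw [Finset.card_erase_add_one hj, Finset.compl_erase, Finset.sum_insert (by simpa using hj),
    Finset.insert_erase hj, filter_lt_erase_self, map_add, mul_add]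
  congr 1
  · rw [map_neg_one_pow_mul, ← mul_assoc, ← pow_add, Even.neg_one_pow ⟨_, rfl⟩, one_mul,
      pderiv_mul, pderiv_X_self, one_mul, pderiv_scaleInt]
  · rw [map_sum, Finset.mul_sum]
    refine Finset.sum_congr rfl fun k hk => ?_
    have hkj : k ≠ j := by rintro rfl; exact Finset.mem_compl.mp hk hj
    rw [map_neg_one_pow_mul, pderiv_mul, pderiv_X_of_ne hkj, zero_mul, zero_add,
      pderiv_scaleInt, mul_assoc]

lemma hOp_dForm_apply (ω : SForm n K) (S : Finset (Fin n)) :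
    hOp (dForm ω) S =
      ∑ k ∈ Sᶜ, X k * scaleInt (S.card + 1) (pderiv k (ω S)) +
      ∑ k ∈ Sᶜ, ∑ j ∈ S,
        (-1) ^ (S.filter (· < k)).card * (-1) ^ ((insert k S).filter (· < j)).card *
          (X k * scaleInt (S.card + 1) (pderiv j (ω (insert k (S.erase j))))) := by
  simp only [dForm, hOp]
  rw [← Finset.sum_add_distrib]
  refine Finset.sum_congr rfl fun k hk => ?_
  have hkS : k ∉ S := Finset.mem_compl.mp hk
  simp only [← scaleIntLinearMap_apply, Finset.sum_insert hkS, map_add, map_sum,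
    map_neg_one_pow_mul, Finset.erase_insert hkS, filter_lt_insert_self, mul_add, Finset.mul_sum]
  congr 1
  · rw [mul_left_comm, ← mul_assoc ((-1) ^ _), ← pow_add, Even.neg_one_pow ⟨_, rfl⟩, one_mul]
  · refine Finset.sum_congr rfl fun j hj => ?_
    rw [Finset.erase_insert_of_ne (ne_of_mem_of_not_mem hj hkS).symm]
    ring

end Forms

/-- The operators `h_n^i ω = ∫_I (φ_n^i)* ω` on polynomial
differential forms on the `n`-simplex, where `φ_n^i(u, x) = u·x + (1−u)·e_i`,
satisfy the homotopy identity `d ∘ h_n^i + h_n^i ∘ d = id − ε_n^i`, with `ε_n^i`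
the evaluation at the vertex `e_i`. -/
theorem stmt10 {n : ℕ} {K : Type*} [Field K] [CharZero K] (ω : SForm n K) :
    dForm (hOp ω) + hOp (dForm ω) = ω - evalVertex ω := by
  funext S
  rw [Pi.add_apply, dForm_hOp_apply, hOp_dForm_apply, add_add_add_comm,
    sum_sum_neg_one_pow_filter_lt_cancel, add_zero, Finset.sum_add_distrib, Finset.sum_const,
    add_assoc, Finset.sum_add_sum_compl]
  calc _ = scaleInt S.card (S.card • ω S + ∑ j, X j * pderiv j (ω S)) := by
        simp only [X_mul_scaleInt_succ]
        simp only [← scaleIntLinearMap_apply, map_add, map_sum, map_nsmul]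
    _ = _ := by rw [scaleInt_euler, Pi.sub_apply, evalVertex_apply]

end
end

section
/- Given infinity morphisms f = (f₁,f₂), g = (g₁,g₂), h = (h₁,h₂) between 2-term Leibniz infinity algebras V and W, if θ₁ is a 2-term infinity homotopy from f to g and τ₁ is a 2-term infinity homotopy from g to h, then θ₁ + τ₁ is a 2-term infinity homotopy from f to h. -/
/-- A 2-term Leibniz infinity algebra on `V₀ ⊕ V₁`: structure maps `l₁, l₂, l₃`
(the degree-0 binary bracket `l₂` has components `l₂ : V₀⊗V₀ → V₀`,
`l₂l : V₀⊗V₁ → V₁`, `l₂r : V₁⊗V₀ → V₁`) satisfying the truncated higher Jacobi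
identities (a)–(e). -/
structure TwoTermLeibniz (K : Type*) [Field K] (V₀ V₁ : Type*)
    [AddCommGroup V₀] [Module K V₀] [AddCommGroup V₁] [Module K V₁] where
  l₁ : V₁ →ₗ[K] V₀
  l₂ : V₀ →ₗ[K] V₀ →ₗ[K] V₀
  l₂l : V₀ →ₗ[K] V₁ →ₗ[K] V₁
  l₂r : V₁ →ₗ[K] V₀ →ₗ[K] V₁
  l₃ : V₀ →ₗ[K] V₀ →ₗ[K] V₀ →ₗ[K] V₁
  ha₁ : ∀ x h, l₁ (l₂l x h) = l₂ x (l₁ h)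
  ha₂ : ∀ h x, l₁ (l₂r h x) = l₂ (l₁ h) x
  hb : ∀ h k, l₂l (l₁ h) k = l₂r h (l₁ k)
  hc : ∀ x y z, l₁ (l₃ x y z) = l₂ x (l₂ y z) - l₂ y (l₂ x z) - l₂ (l₂ x y) z
  hd₁ : ∀ x y h, l₃ x y (l₁ h) = l₂l x (l₂l y h) - l₂l y (l₂l x h) - l₂l (l₂ x y) h
  hd₂ : ∀ x h y, l₃ x (l₁ h) y = l₂l x (l₂r h y) - l₂r h (l₂ x y) - l₂r (l₂l x h) y
  hd₃ : ∀ h x y, l₃ (l₁ h) x y = l₂r h (l₂ x y) - l₂l x (l₂r h y) - l₂r (l₂r h x) y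
  he : ∀ w x y z,
    l₂r (l₃ w x y) z + l₂l w (l₃ x y z) - l₂l x (l₃ w y z) + l₂l y (l₃ w x z)
      - l₃ (l₂ w x) y z + l₃ w (l₂ x y) z - l₃ x (l₂ w y) z - l₃ w x (l₂ y z)
      + l₃ w y (l₂ x z) - l₃ x y (l₂ w z) = 0

/-- An infinity morphism `(f₀, f₁, f₂)` between 2-term Leibniz infinity algebras:
a chain map `(f₀, f₁)` together with a degree-1 bilinear map `f₂ : V₀⊗V₀ → W₁`
satisfying the truncated morphism identities (a)–(d). -/
structure LeibMorphism {K : Type*} [Field K] {V₀ V₁ W₀ W₁ : Type*}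
    [AddCommGroup V₀] [Module K V₀] [AddCommGroup V₁] [Module K V₁]
    [AddCommGroup W₀] [Module K W₀] [AddCommGroup W₁] [Module K W₁]
    (LV : TwoTermLeibniz K V₀ V₁) (LW : TwoTermLeibniz K W₀ W₁) where
  f₀ : V₀ →ₗ[K] W₀
  f₁ : V₁ →ₗ[K] W₁
  f₂ : V₀ →ₗ[K] V₀ →ₗ[K] W₁
  ma : ∀ h, LW.l₁ (f₁ h) = f₀ (LV.l₁ h)
  mb : ∀ x y, LW.l₂ (f₀ x) (f₀ y) + LW.l₁ (f₂ x y) = f₀ (LV.l₂ x y)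
  mc₁ : ∀ x h, LW.l₂l (f₀ x) (f₁ h) = f₁ (LV.l₂l x h) - f₂ x (LV.l₁ h)
  mc₂ : ∀ h x, LW.l₂r (f₁ h) (f₀ x) = f₁ (LV.l₂r h x) - f₂ (LV.l₁ h) x
  md : ∀ x y z,
    LW.l₃ (f₀ x) (f₀ y) (f₀ z) - LW.l₂r (f₂ x y) (f₀ z)
        + LW.l₂l (f₀ x) (f₂ y z) - LW.l₂l (f₀ y) (f₂ x z)
      = f₁ (LV.l₃ x y z) + f₂ (LV.l₂ x y) z - f₂ x (LV.l₂ y z) + f₂ y (LV.l₂ x z)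

/-- A 2-term infinity homotopy `θ : f ⇒ g` between infinity morphisms of 2-term
Leibniz infinity algebras: a degree-1 linear map `θ : V₀ → W₁` satisfying the
homotopy identities (a), (b), (c). -/
def IsHomotopy {K : Type*} [Field K] {V₀ V₁ W₀ W₁ : Type*}
    [AddCommGroup V₀] [Module K V₀] [AddCommGroup V₁] [Module K V₁]
    [AddCommGroup W₀] [Module K W₀] [AddCommGroup W₁] [Module K W₁]
    {LV : TwoTermLeibniz K V₀ V₁} {LW : TwoTermLeibniz K W₀ W₁}
    (f g : LeibMorphism LV LW) (θ : V₀ →ₗ[K] W₁) : Prop :=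
  (∀ x, g.f₀ x - f.f₀ x = LW.l₁ (θ x)) ∧
  (∀ h, g.f₁ h - f.f₁ h = θ (LV.l₁ h)) ∧
  (∀ x y, g.f₂ x y - f.f₂ x y
    = θ (LV.l₂ x y) - LW.l₂l (f.f₀ x) (θ y) - LW.l₂r (θ x) (g.f₀ y))

section

variable {K : Type*} [Field K] {V₀ V₁ W₀ W₁ : Type*}
  [AddCommGroup V₀] [Module K V₀] [AddCommGroup V₁] [Module K V₁]
  [AddCommGroup W₀] [Module K W₀] [AddCommGroup W₁] [Module K W₁]
  {LV : TwoTermLeibniz K V₀ V₁} {LW : TwoTermLeibniz K W₀ W₁}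

-- Identity (b) of `LW` turns the left action of `g.f₀ - f.f₀ = l₁ ∘ θ` into a right action of `θ`.
theorem IsHomotopy.l₂l_sub_l₂l {f g : LeibMorphism LV LW} {θ : V₀ →ₗ[K] W₁}
    (hθ : IsHomotopy f g θ) (x : V₀) (k : W₁) :
    LW.l₂l (g.f₀ x) k - LW.l₂l (f.f₀ x) k = LW.l₂r (θ x) (LW.l₁ k) := by
  rw [← LinearMap.sub_apply, ← map_sub, hθ.1 x]
  exact LW.hb _ _

end

/-- If `θ` is a 2-term infinity homotopy from `f` to `g` and `τ` one
from `g` to `h`, then `θ + τ` is a 2-term infinity homotopy from `f` to `h`. -/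
theorem stmt15 {K : Type*} [Field K] {V₀ V₁ W₀ W₁ : Type*}
    [AddCommGroup V₀] [Module K V₀] [AddCommGroup V₁] [Module K V₁]
    [AddCommGroup W₀] [Module K W₀] [AddCommGroup W₁] [Module K W₁]
    {LV : TwoTermLeibniz K V₀ V₁} {LW : TwoTermLeibniz K W₀ W₁}
    (f g h : LeibMorphism LV LW) (θ τ : V₀ →ₗ[K] W₁)
    (hθ : IsHomotopy f g θ) (hτ : IsHomotopy g h τ) :
    IsHomotopy f h (θ + τ) := by
  refine ⟨fun x => ?_, fun k => ?_, fun x y => ?_⟩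
  · rw [LinearMap.add_apply, map_add, ← hθ.1 x, ← hτ.1 x]
    abel
  · rw [LinearMap.add_apply, ← hθ.2.1 k, ← hτ.2.1 k]
    abel
  · have hcross := hθ.l₂l_sub_l₂l x (τ y)
    rw [← hτ.1 y, map_sub] at hcross
    calc h.f₂ x y - f.f₂ x y = (g.f₂ x y - f.f₂ x y) + (h.f₂ x y - g.f₂ x y) := by abel
      _ = θ (LV.l₂ x y) - LW.l₂l (f.f₀ x) (θ y) - LW.l₂r (θ x) (g.f₀ y)
          + (τ (LV.l₂ x y) - LW.l₂l (g.f₀ x) (τ y) - LW.l₂r (τ x) (h.f₀ y)) := by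
        rw [hθ.2.2 x y, hτ.2.2 x y]
      _ = (θ + τ) (LV.l₂ x y) - LW.l₂l (f.f₀ x) ((θ + τ) y)
          - LW.l₂r ((θ + τ) x) (h.f₀ y) := by
        simp only [LinearMap.add_apply, map_add]
        rw [sub_eq_iff_eq_add.mp hcross]
        abel
end

section
/- The vertical composition of 2-term infinity homotopies between infinity morphisms of 2-term Leibniz infinity algebras, given by τ₁∘₁θ₁ = τ₁ + θ₁, is associative and admits the zero map as identity; hence hom-sets of infinity morphisms with 2-term infinity homotopies form a category (groupoid). -/
namespace IsHomotopy

variable {K : Type*} [Field K] {V₀ V₁ W₀ W₁ : Type*}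
  [AddCommGroup V₀] [Module K V₀] [AddCommGroup V₁] [Module K V₁]
  [AddCommGroup W₀] [Module K W₀] [AddCommGroup W₁] [Module K W₁]
  {LV : TwoTermLeibniz K V₀ V₁} {LW : TwoTermLeibniz K W₀ W₁}
  {f g f' g' h : LeibMorphism LV LW} {θ τ : V₀ →ₗ[K] W₁}

theorem refl (f : LeibMorphism LV LW) : IsHomotopy f f 0 :=
  ⟨fun _ => by simp, fun _ => by simp, fun _ _ => by simp⟩

/-- The cross terms of composite and inverse homotopies cancel by this instance of identity (b). -/
theorem l₂l_sub_f₀_eq_l₂r (hθ : IsHomotopy f g θ) (hτ : IsHomotopy f' g' τ) (x y : V₀) :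
    LW.l₂l (g.f₀ x - f.f₀ x) (τ y) = LW.l₂r (θ x) (g'.f₀ y - f'.f₀ y) := by
  rw [hθ.1 x, hτ.1 y]
  exact LW.hb _ _

theorem trans (hθ : IsHomotopy f g θ) (hτ : IsHomotopy g h τ) : IsHomotopy f h (τ + θ) := by
  refine ⟨fun x => ?_, fun k => ?_, fun x y => ?_⟩
  · rw [LinearMap.add_apply, map_add, ← hθ.1 x, ← hτ.1 x]
    abel
  · rw [LinearMap.add_apply, ← hθ.2.1 k, ← hτ.2.1 k]
    abel
  · have exchange := hθ.l₂l_sub_f₀_eq_l₂r hτ x y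
    simp only [map_sub, LinearMap.sub_apply] at exchange
    simp only [LinearMap.add_apply, map_add]
    linear_combination (norm := abel) hθ.2.2 x y + hτ.2.2 x y - exchange

theorem symm (hθ : IsHomotopy f g θ) : IsHomotopy g f (-θ) := by
  refine ⟨fun x => ?_, fun k => ?_, fun x y => ?_⟩
  · rw [LinearMap.neg_apply, map_neg, ← hθ.1 x]
    abel
  · rw [LinearMap.neg_apply, ← hθ.2.1 k]
    abel
  · have exchange := hθ.l₂l_sub_f₀_eq_l₂r hθ x y
    simp only [map_sub, LinearMap.sub_apply] at exchange
    simp only [LinearMap.neg_apply, map_neg]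
    linear_combination (norm := abel) -hθ.2.2 x y - exchange

end IsHomotopy

/-- Vertical composition of 2-term infinity homotopies, given by
`τ ∘₁ θ = τ + θ`, is well defined (closed), associative, admits the zero map as
identity, and every homotopy is invertible: hom-sets of infinity morphisms with
2-term infinity homotopies form a category (indeed a groupoid). -/
theorem stmt16 {K : Type*} [Field K] {V₀ V₁ W₀ W₁ : Type*}
    [AddCommGroup V₀] [Module K V₀] [AddCommGroup V₁] [Module K V₁]
    [AddCommGroup W₀] [Module K W₀] [AddCommGroup W₁] [Module K W₁]
    (LV : TwoTermLeibniz K V₀ V₁) (LW : TwoTermLeibniz K W₀ W₁) :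
    (∀ f : LeibMorphism LV LW, IsHomotopy f f (0 : V₀ →ₗ[K] W₁)) ∧
    (∀ (f g h : LeibMorphism LV LW) (θ τ : V₀ →ₗ[K] W₁),
      IsHomotopy f g θ → IsHomotopy g h τ → IsHomotopy f h (τ + θ)) ∧
    (∀ θ τ υ : V₀ →ₗ[K] W₁, υ + (τ + θ) = (υ + τ) + θ) ∧
    (∀ (f g : LeibMorphism LV LW) (θ : V₀ →ₗ[K] W₁),
      IsHomotopy f g θ → θ + 0 = θ ∧ 0 + θ = θ) ∧
    (∀ (f g : LeibMorphism LV LW) (θ : V₀ →ₗ[K] W₁),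
      IsHomotopy f g θ → IsHomotopy g f (-θ)) :=
  ⟨IsHomotopy.refl, fun _ _ _ _ _ => IsHomotopy.trans,
    fun θ τ υ => (add_assoc υ τ θ).symm, fun _ _ θ _ => ⟨add_zero θ, zero_add θ⟩,
    fun _ _ _ => IsHomotopy.symm⟩
end

section
/- For the horizontal composition of 2-term infinity homotopies, the two candidate formulas agree: if θ₁ : f ⇒ g (between morphisms V → W) and τ₁ : f' ⇒ g' (between morphisms W → X), then g'₁θ₁ + τ₁f₁ = f'₁θ₁ + τ₁g₁. -/
theorem add_map_eq_add_map_of_sub_eq {M₁ M₂ M₃ N F : Type*} [AddCommGroup M₃] [AddCommGroup N]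
    [FunLike F M₃ N] [AddMonoidHomClass F M₃ N]
    (φ ψ : M₂ → N) (α β : M₁ → M₃) (d : M₂ → M₃) (τ : F) (θ : M₁ → M₂)
    (hτ : ∀ w, ψ w - φ w = τ (d w)) (hθ : ∀ x, β x - α x = d (θ x)) (x : M₁) :
    ψ (θ x) + τ (α x) = φ (θ x) + τ (β x) := by
  rw [add_comm (φ (θ x)), ← sub_eq_sub_iff_add_eq_add, hτ, ← map_sub, hθ]

/-- The two candidate formulas for the horizontal composite of 2-term
infinity homotopies agree: if `θ : f ⇒ g` (between morphisms `V → W`) and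
`τ : f' ⇒ g'` (between morphisms `W → X`), then `g'₁ θ + τ f₁ = f'₁ θ + τ g₁`. -/
theorem stmt17 {K : Type*} [Field K] {V₀ V₁ W₀ W₁ X₀ X₁ : Type*}
    [AddCommGroup V₀] [Module K V₀] [AddCommGroup V₁] [Module K V₁]
    [AddCommGroup W₀] [Module K W₀] [AddCommGroup W₁] [Module K W₁]
    [AddCommGroup X₀] [Module K X₀] [AddCommGroup X₁] [Module K X₁]
    {LV : TwoTermLeibniz K V₀ V₁} {LW : TwoTermLeibniz K W₀ W₁}
    {LX : TwoTermLeibniz K X₀ X₁}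
    (f g : LeibMorphism LV LW) (f' g' : LeibMorphism LW LX)
    (θ : V₀ →ₗ[K] W₁) (τ : W₀ →ₗ[K] X₁)
    (hθ : IsHomotopy f g θ) (hτ : IsHomotopy f' g' τ) :
    ∀ x : V₀, g'.f₁ (θ x) + τ (f.f₀ x) = f'.f₁ (θ x) + τ (g.f₀ x) := by
  intro x
  exact add_map_eq_add_map_of_sub_eq f'.f₁ g'.f₁ f.f₀ g.f₀ LW.l₁ τ θ hτ.2.1 hθ.1 x
end
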